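/- arXiv:2008.00799 — 2 statements merged into one kernel-verified Lean document; each statement's English description precedes it below -/
import Mathlib

section
/- Let c₁ be the real root of c₁³ + (27/4)c₁ - 27/8 = 0 and b₁ = √(9/4 + c₁²/3). Then the 3×3 matrix A = [[-c₁/3 + ib₁, -1, -1/2], [-1, 2c₁/3, -1], [-1/2, -1, -c₁/3 - ib₁]] has a first column and third column that are linearly independent over ℂ; in particular rank(A) ≥ 2. -/
open Complex Matrix

theorem LinearIndependent.pair_of_mul_sub_mul_ne_zero {R ι : Type*} [CommRing R]
    [NoZeroDivisors R] {u v : ι → R} (i j : ι) (h : u i * v j - u j * v i ≠ 0) :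
    LinearIndependent R ![u, v] := by
  rw [LinearIndependent.pair_iff]
  intro s t hst
  have hi : s * u i + t * v i = 0 := by simpa using congrFun hst i
  have hj : s * u j + t * v j = 0 := by simpa using congrFun hst j
  have hs : s * (u i * v j - u j * v i) = 0 := by linear_combination v j * hi - v i * hj
  have ht : t * (u i * v j - u j * v i) = 0 := by linear_combination u i * hj - u j * hi
  exact ⟨(mul_eq_zero.1 hs).resolve_right h, (mul_eq_zero.1 ht).resolve_right h⟩

theorem Matrix.card_le_rank_of_linearIndependent_col_comp {K m n ι : Type*} [Field K]
    [Fintype m] [Fintype n] [Fintype ι] (A : Matrix m n K) (c : ι → n)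
    (h : LinearIndependent K (A.col ∘ c)) : Fintype.card ι ≤ A.rank :=
  calc Fintype.card ι = (A.submatrix id c)ᵀ.rank := (LinearIndependent.rank_matrix h).symm
    _ = (A.submatrix id c).rank := rank_transpose _
    _ ≤ A.rank := rank_submatrix_le A id c

theorem stmt_7_general (c₁ b₁ : ℝ)
    (hb : b₁ = Real.sqrt (9 / 4 + c₁ ^ 2 / 3))
    (A : Matrix (Fin 3) (Fin 3) ℂ)
    (hA : A = !![-(c₁ : ℂ) / 3 + (b₁ : ℂ) * I, -1, -1/2;
                 -1, 2 * (c₁ : ℂ) / 3, -1;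
                 -1/2, -1, -(c₁ : ℂ) / 3 - (b₁ : ℂ) * I]) :
    LinearIndependent ℂ ![(fun i => A i 0 : Fin 3 → ℂ), (fun i => A i 2 : Fin 3 → ℂ)] ∧
    2 ≤ A.rank := by
  have hb₁ : b₁ ≠ 0 := hb ▸ (Real.sqrt_pos.2 (by positivity)).ne'
  have hcols : LinearIndependent ℂ ![(fun i => A i 0 : Fin 3 → ℂ), (fun i => A i 2 : Fin 3 → ℂ)] := by
    refine LinearIndependent.pair_of_mul_sub_mul_ne_zero 0 1 fun h => hb₁ ?_
    -- the imaginary part of this minor is `-b₁`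
    simpa [hA] using congrArg im h
  refine ⟨hcols, ?_⟩
  have hcol : A.col ∘ ![0, 2] = ![fun i => A i 0, fun i => A i 2] := by
    ext k; fin_cases k <;> rfl
  simpa using A.card_le_rank_of_linearIndependent_col_comp ![0, 2] (hcol ▸ hcols)

theorem stmt_7 (c₁ b₁ : ℝ)
    (hc : c₁ ^ 3 + 27 / 4 * c₁ - 27 / 8 = 0)
    (hb : b₁ = Real.sqrt (9 / 4 + c₁ ^ 2 / 3))
    (A : Matrix (Fin 3) (Fin 3) ℂ)
    (hA : A = !![-(c₁ : ℂ) / 3 + (b₁ : ℂ) * I, -1, -1/2;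
                 -1, 2 * (c₁ : ℂ) / 3, -1;
                 -1/2, -1, -(c₁ : ℂ) / 3 - (b₁ : ℂ) * I]) :
    LinearIndependent ℂ ![(fun i => A i 0 : Fin 3 → ℂ), (fun i => A i 2 : Fin 3 → ℂ)] ∧
    2 ≤ A.rank :=
  stmt_7_general c₁ b₁ hb A hA
end

section
/- For small ε > 0 there exist real b > 0 and c > 0 solving the trimer exceptional point equations, with asymptotic expansions b = b₁ε + O(ε²) and c = 1 + c₁ε + O(ε²), where c₁ is the real root of c₁³ + (27/4)c₁ - 27/8 = 0 and b₁ = √(9/4 + c₁²/3). -/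
set_option maxHeartbeats 4000000

private lemma sqrt_diff_bound {d w r e : ℝ} (hd : d * w = r) (hw : 3/2 ≤ w)
    (hru : r ≤ 80*e) (hrl : -(80*e) ≤ r) (he : 0 < e) : -(60*e) ≤ d ∧ d ≤ 60*e := by
  constructor <;> nlinarith

theorem stmt_8 (c₁ b₁ : ℝ)
    (hc₁ : c₁ ^ 3 + 27 / 4 * c₁ - 27 / 8 = 0)
    (hb₁ : b₁ = Real.sqrt (9 / 4 + c₁ ^ 2 / 3)) :
    ∃ ε₀ K : ℝ, 0 < ε₀ ∧ ∃ b c : ℝ → ℝ, ∀ ε : ℝ, 0 < ε → ε < ε₀ →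
      0 < b ε ∧ 0 < c ε ∧
      1 + (b ε) ^ 2 = (1 - ε ^ 2 / 4)⁻¹ * ((c ε + 2) ^ 2 / 3 - 2 * (1 - ε ^ 2) * (c ε)) ∧
      (1 - ε ^ 2 / 4) * (c ε + 2) ^ 3 / 27
        = (c ε) * (1 - 9 / 4 * ε ^ 2 - ε ^ 3) * ((c ε + 2) ^ 2 / 3 - 2 * (1 - ε ^ 2) * (c ε)) ∧
      |b ε - b₁ * ε| ≤ K * ε ^ 2 ∧
      |c ε - (1 + c₁ * ε)| ≤ K * ε ^ 2 := by
  have hc0 : 0 < c₁ := by nlinarith [sq_nonneg c₁, sq_nonneg (c₁ + 1)]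
  have hc5 : c₁ < 1/2 := by nlinarith [sq_nonneg (c₁ - 1/2), sq_nonneg c₁]
  have hb₁sq : b₁ ^ 2 = 9/4 + c₁^2/3 := by
    rw [hb₁, Real.sq_sqrt (by positivity)]
  have hb₁32 : (3:ℝ)/2 ≤ b₁ := by
    have h0 : 0 ≤ b₁ := hb₁ ▸ Real.sqrt_nonneg _
    nlinarith [sq_nonneg c₁]
  -- bounds on the perturbation polynomial Q
  have hQ : ∀ s e : ℝ, -(3/2) ≤ s → s ≤ 3/2 → 0 ≤ e → e ≤ 1 →
      -50 ≤ (9/2 + 2*e + s + 9*e*s + 4*e^2*s - 4/3*s^2 + 1/3*e*s^2 + 9/2*e^2*s^2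
        + 2*e^3*s^2 + 20/27*e*s^3 + 1/3*e^2*s^3) ∧
      (9/2 + 2*e + s + 9*e*s + 4*e^2*s - 4/3*s^2 + 1/3*e*s^2 + 9/2*e^2*s^2
        + 2*e^3*s^2 + 20/27*e*s^3 + 1/3*e^2*s^3) ≤ 50 := by
    intro s e hs1 hs2 he1 he2
    have hm1l : -(3/2) ≤ e*s := by nlinarith
    have hm1u : e*s ≤ 3/2 := by nlinarith
    have hm2l : -(3/2) ≤ e^2*s := by nlinarith [mul_nonneg he1 he1]
    have hm2u : e^2*s ≤ 3/2 := by nlinarith [mul_nonneg he1 he1]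
    have hm3l : (0:ℝ) ≤ s^2 := sq_nonneg s
    have hm3u : s^2 ≤ 9/4 := by nlinarith
    have hm4l : (0:ℝ) ≤ e*s^2 := by positivity
    have hm4u : e*s^2 ≤ 9/4 := by nlinarith
    have hm5l : (0:ℝ) ≤ e^2*s^2 := by positivity
    have hm5u : e^2*s^2 ≤ 9/4 := by nlinarith [mul_nonneg he1 he1]
    have hm6l : (0:ℝ) ≤ e^3*s^2 := by positivity
    have hm6u : e^3*s^2 ≤ 9/4 := by nlinarith [mul_nonneg (mul_nonneg he1 he1) he1]
    have hm7l : -(27/8) ≤ e*s^3 := by nlinarith [mul_nonneg he1 (sq_nonneg s)]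
    have hm7u : e*s^3 ≤ 27/8 := by nlinarith [mul_nonneg he1 (sq_nonneg s)]
    have hm8l : -(27/8) ≤ e^2*s^3 := by nlinarith [mul_nonneg (mul_nonneg he1 he1) (sq_nonneg s)]
    have hm8u : e^2*s^3 ≤ 27/8 := by nlinarith [mul_nonneg (mul_nonneg he1 he1) (sq_nonneg s)]
    constructor <;> linarith
  -- monotone bounds on the unperturbed cubic
  have hP0low : ∀ h : ℝ, 0 ≤ h → 2*h ≤ 1 - 2*(c₁ - h) - 8/27*(c₁ - h)^3 := by
    intro h hh
    nlinarith [mul_nonneg hh (sq_nonneg (2*c₁ - h)), mul_nonneg hh (mul_nonneg hh hh)]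
  have hP0up : ∀ h : ℝ, 0 ≤ h → 1 - 2*(c₁ + h) - 8/27*(c₁ + h)^3 ≤ -(2*h) := by
    intro h hh
    nlinarith [mul_nonneg hh (sq_nonneg (2*c₁ + h)), mul_nonneg hh (mul_nonneg hh hh)]
  -- existence of a root t(ε) of P(·, ε) close to c₁
  have key : ∀ ε : ℝ, ∃ u : ℝ, 0 < ε → ε < 1/50 →
      ((1 - 2*u - 8/27*u^3) + ε * (9/2 + 2*ε + u + 9*ε*u + 4*ε^2*u - 4/3*u^2 + 1/3*ε*u^2
        + 9/2*ε^2*u^2 + 2*ε^3*u^2 + 20/27*ε*u^3 + 1/3*ε^2*u^3) = 0 ∧ |u - c₁| ≤ 50*ε) := by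
    intro ε
    by_cases hε : 0 < ε ∧ ε < 1/50
    · obtain ⟨hε0, hε1⟩ := hε
      set f : ℝ → ℝ := fun s => (1 - 2*s - 8/27*s^3) + ε * (9/2 + 2*ε + s + 9*ε*s + 4*ε^2*s
        - 4/3*s^2 + 1/3*ε*s^2 + 9/2*ε^2*s^2 + 2*ε^3*s^2 + 20/27*ε*s^3 + 1/3*ε^2*s^3) with hf
      have h50 : (0:ℝ) ≤ 50*ε := by linarith
      have hab : c₁ - 50*ε ≤ c₁ + 50*ε := by linarith
      have hcont : ContinuousOn f (Set.Icc (c₁ - 50*ε) (c₁ + 50*ε)) := by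
        apply Continuous.continuousOn; rw [hf]; fun_prop
      have hQa := hQ (c₁ - 50*ε) ε (by linarith) (by linarith) hε0.le (by linarith)
      have hQb := hQ (c₁ + 50*ε) ε (by linarith) (by linarith) hε0.le (by linarith)
      have hfa : 0 < f (c₁ - 50*ε) := by
        have h1 := hP0low (50*ε) h50
        have h2 : ε * (-50) ≤ ε * (9/2 + 2*ε + (c₁ - 50*ε) + 9*ε*(c₁ - 50*ε) + 4*ε^2*(c₁ - 50*ε)
            - 4/3*(c₁ - 50*ε)^2 + 1/3*ε*(c₁ - 50*ε)^2 + 9/2*ε^2*(c₁ - 50*ε)^2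
            + 2*ε^3*(c₁ - 50*ε)^2 + 20/27*ε*(c₁ - 50*ε)^3 + 1/3*ε^2*(c₁ - 50*ε)^3) := by
          apply mul_le_mul_of_nonneg_left _ hε0.le
          linarith [hQa.1]
        simp only [hf]
        linarith
      have hfb : f (c₁ + 50*ε) < 0 := by
        have h1 := hP0up (50*ε) h50
        have h2 : ε * (9/2 + 2*ε + (c₁ + 50*ε) + 9*ε*(c₁ + 50*ε) + 4*ε^2*(c₁ + 50*ε)
            - 4/3*(c₁ + 50*ε)^2 + 1/3*ε*(c₁ + 50*ε)^2 + 9/2*ε^2*(c₁ + 50*ε)^2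
            + 2*ε^3*(c₁ + 50*ε)^2 + 20/27*ε*(c₁ + 50*ε)^3 + 1/3*ε^2*(c₁ + 50*ε)^3) ≤ ε * 50 := by
          apply mul_le_mul_of_nonneg_left _ hε0.le
          linarith [hQb.2]
        simp only [hf]
        linarith
      have hmem : (0:ℝ) ∈ Set.Icc (f (c₁ + 50*ε)) (f (c₁ - 50*ε)) := ⟨hfb.le, hfa.le⟩
      obtain ⟨u, hu, hfu⟩ := intermediate_value_Icc' hab hcont hmem
      exact ⟨u, fun _ _ => ⟨hfu, abs_le.mpr ⟨by linarith [hu.1], by linarith [hu.2]⟩⟩⟩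
    · exact ⟨0, fun h1 h2 => absurd ⟨h1, h2⟩ hε⟩
  choose t ht using key
  refine ⟨1/50, 100, by norm_num,
    (fun ε => ε * Real.sqrt ((9/4 + (t ε)^2/3 + 2*ε*(t ε)) / (1 - ε^2/4))),
    (fun ε => 1 + ε * t ε), ?_⟩
  intro ε hε0 hε1
  obtain ⟨hP, hud⟩ := ht ε hε0 hε1
  dsimp only
  set u := t ε with hu
  clear ht hQ hP0low hP0up hc₁ hb₁
  have heq2 : (1 - ε ^ 2 / 4) * (1 + ε * u + 2) ^ 3 / 27
      = (1 + ε * u) * (1 - 9 / 4 * ε ^ 2 - ε ^ 3)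
        * ((1 + ε * u + 2) ^ 2 / 3 - 2 * (1 - ε ^ 2) * (1 + ε * u)) := by
    linear_combination (ε^3) * hP
  clear hP
  have habs := abs_le.mp hud
  have hu32l : -(3/2) ≤ u := by linarith [habs.1]
  have hu32u : u ≤ 3/2 := by linarith [habs.2]
  have hD1 : 1/2 ≤ 1 - ε^2/4 := by clear heq2; nlinarith
  have hD2 : 1 - ε^2/4 ≤ 1 := by clear heq2; nlinarith
  have hD0 : 1 - ε^2/4 ≠ 0 := by linarith
  have hNlb : 2 ≤ 9/4 + u^2/3 + 2*ε*u := by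
    clear heq2
    nlinarith [mul_nonneg hε0.le (by linarith : (0:ℝ) ≤ u + 3/2), sq_nonneg u]
  have hS : 0 < (9/4 + u^2/3 + 2*ε*u) / (1 - ε^2/4) := by positivity
  have hsq : Real.sqrt ((9/4 + u^2/3 + 2*ε*u) / (1 - ε^2/4)) ^ 2
      = (9/4 + u^2/3 + 2*ε*u) / (1 - ε^2/4) := Real.sq_sqrt hS.le
  have hsqnn : 0 ≤ Real.sqrt ((9/4 + u^2/3 + 2*ε*u) / (1 - ε^2/4)) := Real.sqrt_nonneg _
  refine ⟨mul_pos hε0 (Real.sqrt_pos.mpr hS), by clear heq2; nlinarith, ?_, heq2, ?_, ?_⟩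
  · -- equation 1
    clear heq2
    rw [mul_pow, hsq]
    have hDinv : (1 - ε^2/4)⁻¹ * (1 - ε^2/4) = 1 := inv_mul_cancel₀ hD0
    have hSD0 : ((9/4 + u^2/3 + 2*ε*u) / (1 - ε^2/4)) * (1 - ε^2/4)
        = 9/4 + u^2/3 + 2*ε*u := div_mul_cancel₀ _ hD0
    linear_combination (ε^2 * (1 - ε^2/4)⁻¹) * hSD0
      + (-1 - ε^2 * ((9/4 + u^2/3 + 2*ε*u)/(1 - ε^2/4))) * hDinv
  · -- bound on b
    clear heq2
    have hR1 : (9/4 + u^2/3 + 2*ε*u) - (1 - ε^2/4) * b₁^2 ≤ 40*ε := by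
      rw [hb₁sq]
      nlinarith [mul_nonneg (by linarith [habs.2] : (0:ℝ) ≤ 50*ε - (u - c₁))
          (by linarith [habs.1] : (0:ℝ) ≤ (u + c₁) + 1),
        mul_nonneg (by linarith [habs.1] : (0:ℝ) ≤ (u - c₁) + 50*ε)
          (by linarith : (0:ℝ) ≤ 2 - (u + c₁)),
        mul_nonneg hε0.le (by linarith : (0:ℝ) ≤ 3/2 - u), sq_nonneg c₁,
        mul_nonneg hε0.le (by linarith : (0:ℝ) ≤ 1/50 - ε)]
    have hR2 : -(40*ε) ≤ (9/4 + u^2/3 + 2*ε*u) - (1 - ε^2/4) * b₁^2 := by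
      rw [hb₁sq]
      nlinarith [mul_nonneg (by linarith [habs.2] : (0:ℝ) ≤ 50*ε - (u - c₁))
          (by linarith : (0:ℝ) ≤ 2 - (u + c₁)),
        mul_nonneg (by linarith [habs.1] : (0:ℝ) ≤ (u - c₁) + 50*ε)
          (by linarith [habs.1] : (0:ℝ) ≤ (u + c₁) + 1),
        mul_nonneg hε0.le (by linarith : (0:ℝ) ≤ u + 3/2), sq_nonneg ε, sq_nonneg c₁]
    have hDpos : (0:ℝ) < 1 - ε^2/4 := by linarith
    have hSup : (9/4 + u^2/3 + 2*ε*u) / (1 - ε^2/4) - b₁^2 ≤ 80*ε := by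
      rw [sub_le_iff_le_add, div_le_iff₀ hDpos]
      nlinarith [mul_nonneg hε0.le (by linarith : (0:ℝ) ≤ 2*(1 - ε^2/4) - 1)]
    have hSlo : -(80*ε) ≤ (9/4 + u^2/3 + 2*ε*u) / (1 - ε^2/4) - b₁^2 := by
      rw [neg_le_sub_iff_le_add, ← sub_le_iff_le_add, le_div_iff₀ hDpos]
      nlinarith [mul_nonneg hε0.le (by linarith : (0:ℝ) ≤ 2*(1 - ε^2/4) - 1)]
    have hfac : (Real.sqrt ((9/4 + u^2/3 + 2*ε*u) / (1 - ε^2/4)) - b₁)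
        * (Real.sqrt ((9/4 + u^2/3 + 2*ε*u) / (1 - ε^2/4)) + b₁)
        = (9/4 + u^2/3 + 2*ε*u) / (1 - ε^2/4) - b₁^2 := by
      linear_combination hsq
    obtain ⟨hdl, hdu⟩ := sqrt_diff_bound hfac (by linarith) (by linarith) (by linarith) hε0
    have heq : ε * Real.sqrt ((9/4 + u^2/3 + 2*ε*u) / (1 - ε^2/4)) - b₁ * ε
        = ε * (Real.sqrt ((9/4 + u^2/3 + 2*ε*u) / (1 - ε^2/4)) - b₁) := by ring
    rw [heq, abs_mul, abs_of_pos hε0]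
    have habs2 : |Real.sqrt ((9/4 + u^2/3 + 2*ε*u) / (1 - ε^2/4)) - b₁| ≤ 60*ε :=
      abs_le.mpr ⟨hdl, hdu⟩
    calc ε * |Real.sqrt ((9/4 + u^2/3 + 2*ε*u) / (1 - ε^2/4)) - b₁| ≤ ε * (60*ε) :=
          mul_le_mul_of_nonneg_left habs2 hε0.le
      _ ≤ 100 * ε^2 := by nlinarith
  · -- bound on c
    clear heq2
    have heq : 1 + ε * u - (1 + c₁ * ε) = ε * (u - c₁) := by ring
    rw [heq, abs_mul, abs_of_pos hε0]
    calc ε * |u - c₁| ≤ ε * (50*ε) := mul_le_mul_of_nonneg_left hud hε0.le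
      _ ≤ 100 * ε^2 := by nlinarith
end
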